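/- arXiv:2402.09467 — 4 statements merged into one kernel-verified Lean document; each statement's English description precedes it below -/
import Mathlib

section
/- Suppose |x_a^T θ − ρ| ≠ ε for every arm a, and let ξ > 0 satisfy ξ < min_{a ∈ A} ||x_a^T θ − ρ| − ε| / (2‖x_a‖). Then for every θ' ∈ ℝ^d with ‖θ' − θ‖ ≤ ξ one has Π_{ρ+ε}(θ') = Π_{ρ+ε}(θ) and Π_{ρ−ε}(θ') = Π_{ρ−ε}(θ); consequently B(θ') = B(θ). -/
open scoped RealInnerProductSpace

private lemma aux_iff (y z c : ℝ) (h : |y - z| < |z - c|) : c < y ↔ c < z := by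
  rcases abs_lt.1 h with ⟨h1, h2⟩
  rcases lt_trichotomy z c with hc | hc | hc
  · rw [abs_of_neg (by linarith : z - c < 0)] at h1 h2
    constructor <;> intro <;> linarith
  · simp [hc] at h; linarith [abs_nonneg (y - c)]
  · rw [abs_of_pos (by linarith : 0 < z - c)] at h1 h2
    constructor <;> intro <;> linarith

/-- if `|⟪xₐ, θ⟫ - ρ| ≠ ε` for all arms and `0 < ξ < ||⟪xₐ,θ⟫ - ρ| - ε| / (2‖xₐ‖)`
for every arm `a`, then any `θ'` with `‖θ' - θ‖ ≤ ξ` has `Π_{ρ+ε}(θ') = Π_{ρ+ε}(θ)` and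
`Π_{ρ-ε}(θ') = Π_{ρ-ε}(θ)`; consequently the bad-parameter sets coincide: `B(θ') = B(θ)`. -/
theorem stmt4 {d K : ℕ} (x : Fin K → EuclideanSpace ℝ (Fin d)) (ρ ε : ℝ) (hε : 0 ≤ ε)
    (θ : EuclideanSpace ℝ (Fin d)) (hθ : ∀ a : Fin K, |⟪x a, θ⟫ - ρ| ≠ ε)
    (ξ : ℝ) (hξ0 : 0 < ξ)
    (hξ : ∀ a : Fin K, ξ < |(|⟪x a, θ⟫ - ρ|) - ε| / (2 * ‖x a‖))
    (θ' : EuclideanSpace ℝ (Fin d)) (hclose : ‖θ' - θ‖ ≤ ξ) :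
    {a : Fin K | ρ + ε < ⟪x a, θ'⟫} = {a : Fin K | ρ + ε < ⟪x a, θ⟫} ∧
    {a : Fin K | ρ - ε < ⟪x a, θ'⟫} = {a : Fin K | ρ - ε < ⟪x a, θ⟫} ∧
    {θ'' : EuclideanSpace ℝ (Fin d) |
        ¬ ({a : Fin K | ρ + ε < ⟪x a, θ'⟫} ⊆ {a : Fin K | ρ - ε < ⟪x a, θ''⟫}) ∨
        ¬ ({a : Fin K | ρ + ε < ⟪x a, θ''⟫} ⊆ {a : Fin K | ρ - ε < ⟪x a, θ'⟫})} =
      {θ'' : EuclideanSpace ℝ (Fin d) |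
        ¬ ({a : Fin K | ρ + ε < ⟪x a, θ⟫} ⊆ {a : Fin K | ρ - ε < ⟪x a, θ''⟫}) ∨
        ¬ ({a : Fin K | ρ + ε < ⟪x a, θ''⟫} ⊆ {a : Fin K | ρ - ε < ⟪x a, θ⟫})} := by
  have key : ∀ a : Fin K, |⟪x a, θ'⟫ - ⟪x a, θ⟫| < |(|⟪x a, θ⟫ - ρ|) - ε| := by
    intro a
    have hx : 0 < ‖x a‖ := by
      rcases (norm_nonneg (x a)).lt_or_eq with h | h
      · exact h
      · exfalso; have := hξ a; rw [← h] at this; simp at this; linarith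
    have h1 : |⟪x a, θ'⟫ - ⟪x a, θ⟫| ≤ ‖x a‖ * ξ := by
      calc |⟪x a, θ'⟫ - ⟪x a, θ⟫| = |⟪x a, θ' - θ⟫| := by
            rw [inner_sub_right]
        _ ≤ ‖x a‖ * ‖θ' - θ‖ := abs_real_inner_le_norm _ _
        _ ≤ ‖x a‖ * ξ := by
            exact mul_le_mul_of_nonneg_left hclose (norm_nonneg _)
    have h2 := (lt_div_iff₀ (by positivity : (0:ℝ) < 2 * ‖x a‖)).1 (hξ a)
    nlinarith
  have habs1 : ∀ a : Fin K, |(|⟪x a, θ⟫ - ρ|) - ε| ≤ |⟪x a, θ⟫ - (ρ + ε)| := by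
    intro a
    have : |⟪x a, θ⟫ - (ρ + ε)| = |(⟪x a, θ⟫ - ρ) - ε| := by ring_nf
    rw [this]
    have h := abs_abs_sub_abs_le_abs_sub (⟪x a, θ⟫ - ρ) ε
    rw [abs_of_nonneg hε] at h
    exact h
  have habs2 : ∀ a : Fin K, |(|⟪x a, θ⟫ - ρ|) - ε| ≤ |⟪x a, θ⟫ - (ρ - ε)| := by
    intro a
    have : |⟪x a, θ⟫ - (ρ - ε)| = |(⟪x a, θ⟫ - ρ) - (-ε)| := by ring_nf
    rw [this]
    have h := abs_abs_sub_abs_le_abs_sub (⟪x a, θ⟫ - ρ) (-ε)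
    rw [abs_neg, abs_of_nonneg hε] at h
    exact h
  have e1 : {a : Fin K | ρ + ε < ⟪x a, θ'⟫} = {a : Fin K | ρ + ε < ⟪x a, θ⟫} := by
    ext a
    exact aux_iff _ _ _ (lt_of_lt_of_le (key a) (habs1 a))
  have e2 : {a : Fin K | ρ - ε < ⟪x a, θ'⟫} = {a : Fin K | ρ - ε < ⟪x a, θ⟫} := by
    ext a
    exact aux_iff _ _ _ (lt_of_lt_of_le (key a) (habs2 a))
  exact ⟨e1, e2, by rw [e1, e2]⟩
end

section
/- Let λ ∈ Λ be such that A_λ is singular, and suppose there exist an arm a ∈ A_{ρ,ε}(θ) and a vector v in the null space of A_λ with x_a^T v ≠ 0. Then inf_{θ' ∈ B(θ)} (1/2)(θ − θ')^T A_λ (θ − θ') = 0. In particular, any allocation whose design matrix is rank-deficient in such a direction cannot maximize this infimum when the maximum value is positive. -/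
open Matrix

lemma dot_sum_aux {d K : ℕ} (w : Fin d → ℝ) (g : Fin K → Fin d → ℝ) :
    w ⬝ᵥ (∑ b : Fin K, g b) = ∑ b : Fin K, w ⬝ᵥ g b := by
  simp only [dotProduct, Finset.sum_apply, Finset.mul_sum]
  exact Finset.sum_comm

lemma quad_eq_aux {d K : ℕ} (x : Fin K → Fin d → ℝ) (l : Fin K → ℝ) (w : Fin d → ℝ) :
    w ⬝ᵥ (∑ b : Fin K, l b • Matrix.vecMulVec (x b) (x b)).mulVec w
      = ∑ b : Fin K, l b * ((x b ⬝ᵥ w) * (x b ⬝ᵥ w)) := by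
  have hsum : (∑ b : Fin K, l b • Matrix.vecMulVec (x b) (x b)).mulVec w
      = ∑ b : Fin K, (l b • Matrix.vecMulVec (x b) (x b)).mulVec w :=
    map_sum (Matrix.mulVec.addMonoidHomLeft w) _ _
  rw [hsum, dot_sum_aux]
  refine Finset.sum_congr rfl fun b _ => ?_
  rw [smul_mulVec, dotProduct_smul, smul_eq_mul]
  congr 1
  simp only [Matrix.mulVec, dotProduct, Matrix.vecMulVec_apply, Finset.mul_sum, Finset.sum_mul]
  rw [Finset.sum_comm]
  exact Finset.sum_congr rfl fun i _ => Finset.sum_congr rfl fun j _ => by ring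

/-- if the design matrix `A_λ` of an allocation `λ ∈ Λ` is singular, and there
exist an arm `a ∈ A_{ρ,ε}(θ)` and a vector `v` in the null space of `A_λ` with `xₐᵀv ≠ 0`,
then `inf_{θ' ∈ B(θ)} (1/2)(θ - θ')ᵀ A_λ (θ - θ') = 0`. In particular, such an allocation
cannot maximize this infimum over the simplex whenever the maximum value is positive. -/
theorem stmt9 {d K : ℕ} (x : Fin K → Fin d → ℝ) (ρ ε : ℝ) (hε : 0 ≤ ε)
    (θ : Fin d → ℝ) (l : Fin K → ℝ) (hl : l ∈ stdSimplex ℝ (Fin K))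
    (hsing : ¬ IsUnit (∑ a : Fin K, l a • Matrix.vecMulVec (x a) (x a)))
    (a : Fin K) (ha : ρ + ε < x a ⬝ᵥ θ ∨ x a ⬝ᵥ θ ≤ ρ - ε)
    (v : Fin d → ℝ)
    (hv : (∑ b : Fin K, l b • Matrix.vecMulVec (x b) (x b)).mulVec v = 0)
    (hav : x a ⬝ᵥ v ≠ 0) :
    sInf ((fun θ' : Fin d → ℝ =>
        (1 / 2) * ((θ - θ') ⬝ᵥ
          (∑ b : Fin K, l b • Matrix.vecMulVec (x b) (x b)).mulVec (θ - θ'))) ''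
      {θ' : Fin d → ℝ |
        ¬ ({b : Fin K | ρ + ε < x b ⬝ᵥ θ} ⊆ {b : Fin K | ρ - ε < x b ⬝ᵥ θ'}) ∨
        ¬ ({b : Fin K | ρ + ε < x b ⬝ᵥ θ'} ⊆ {b : Fin K | ρ - ε < x b ⬝ᵥ θ})}) = 0 ∧
    ∀ gmax : ℝ,
      IsGreatest ((fun l' : Fin K → ℝ =>
          sInf ((fun θ' : Fin d → ℝ =>
            (1 / 2) * ((θ - θ') ⬝ᵥ
              (∑ b : Fin K, l' b • Matrix.vecMulVec (x b) (x b)).mulVec (θ - θ'))) ''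
          {θ' : Fin d → ℝ |
            ¬ ({b : Fin K | ρ + ε < x b ⬝ᵥ θ} ⊆ {b : Fin K | ρ - ε < x b ⬝ᵥ θ'}) ∨
            ¬ ({b : Fin K | ρ + ε < x b ⬝ᵥ θ'} ⊆ {b : Fin K | ρ - ε < x b ⬝ᵥ θ})})) ''
        stdSimplex ℝ (Fin K)) gmax →
      0 < gmax →
      sInf ((fun θ' : Fin d → ℝ =>
          (1 / 2) * ((θ - θ') ⬝ᵥ
            (∑ b : Fin K, l b • Matrix.vecMulVec (x b) (x b)).mulVec (θ - θ'))) ''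
        {θ' : Fin d → ℝ |
          ¬ ({b : Fin K | ρ + ε < x b ⬝ᵥ θ} ⊆ {b : Fin K | ρ - ε < x b ⬝ᵥ θ'}) ∨
          ¬ ({b : Fin K | ρ + ε < x b ⬝ᵥ θ'} ⊆ {b : Fin K | ρ - ε < x b ⬝ᵥ θ})}) < gmax := by
  set A := ∑ b : Fin K, l b • Matrix.vecMulVec (x b) (x b) with hA
  set f : (Fin d → ℝ) → ℝ := fun θ' =>
    (1 / 2) * ((θ - θ') ⬝ᵥ A.mulVec (θ - θ')) with hf
  set S : Set (Fin d → ℝ) := {θ' : Fin d → ℝ |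
      ¬ ({b : Fin K | ρ + ε < x b ⬝ᵥ θ} ⊆ {b : Fin K | ρ - ε < x b ⬝ᵥ θ'}) ∨
      ¬ ({b : Fin K | ρ + ε < x b ⬝ᵥ θ'} ⊆ {b : Fin K | ρ - ε < x b ⬝ᵥ θ})} with hS
  -- choose a target value c for x a ⬝ᵥ θ'
  obtain ⟨c, hc⟩ : ∃ c : ℝ, ∀ θ' : Fin d → ℝ, x a ⬝ᵥ θ' = c → θ' ∈ S := by
    rcases ha with ha | ha
    · refine ⟨ρ - ε, fun θ' hθ' => Or.inl fun hsub => ?_⟩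
      have := hsub ha
      simp only [Set.mem_setOf_eq, hθ'] at this
      exact lt_irrefl _ this
    · refine ⟨ρ + ε + 1, fun θ' hθ' => Or.inr fun hsub => ?_⟩
      have h1 : θ' ∈ {θ'' : Fin d → ℝ | True} := trivial
      have ha' : a ∈ {b : Fin K | ρ + ε < x b ⬝ᵥ θ'} := by
        simp only [Set.mem_setOf_eq, hθ']; linarith
      have := hsub ha'
      simp only [Set.mem_setOf_eq] at this
      linarith
  -- the witness θ'
  set t : ℝ := (c - x a ⬝ᵥ θ) / (x a ⬝ᵥ v) with ht
  set θ'0 : Fin d → ℝ := θ + t • v with hθ'0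
  have hmem : θ'0 ∈ S := by
    apply hc
    rw [hθ'0, dotProduct_add, dotProduct_smul, smul_eq_mul, ht,
      div_mul_cancel₀ _ hav]
    ring
  have hval : f θ'0 = 0 := by
    have hdiff : θ - θ'0 = -(t • v) := by rw [hθ'0]; abel
    have : A.mulVec (θ - θ'0) = 0 := by
      rw [hdiff, Matrix.mulVec_neg, Matrix.mulVec_smul, hv]
      simp
    rw [hf]
    simp [this]
  have hlb : ∀ y ∈ f '' S, 0 ≤ y := by
    rintro y ⟨θ', _, rfl⟩
    rw [hf, hA]
    have h := quad_eq_aux x l (θ - θ')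
    simp only
    rw [h]
    have : 0 ≤ ∑ b : Fin K, l b * ((x b ⬝ᵥ (θ - θ')) * (x b ⬝ᵥ (θ - θ'))) := by
      apply Finset.sum_nonneg
      intro b _
      exact mul_nonneg (hl.1 b) (mul_self_nonneg _)
    linarith
  have hsInf : sInf (f '' S) = 0 := by
    apply le_antisymm
    · have h0mem : (0 : ℝ) ∈ f '' S := ⟨θ'0, hmem, hval⟩
      exact csInf_le ⟨0, hlb⟩ h0mem
    · exact le_csInf ⟨0, θ'0, hmem, hval⟩ hlb
  refine ⟨hsInf, fun gmax _ hpos => ?_⟩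
  rw [show sInf ((fun θ' : Fin d → ℝ =>
      (1 / 2) * ((θ - θ') ⬝ᵥ A.mulVec (θ - θ'))) '' S) = sInf (f '' S) from rfl, hsInf]
  exact hpos
end

section
/- Let A_0 = {a_0(1),…,a_0(d)} ⊆ A be arms such that λ_min(Σ_{i=1}^d x_{a_0(i)} x_{a_0(i)}^T) > 0, let (b_t)_{t≥1} be an arbitrary sequence of arms, let c_{A_0} = λ_min(Σ_{i=1}^d x_{a_0(i)} x_{a_0(i)}^T)/√d and f(t) = c_{A_0} √t. Define the sampling rule recursively by i_0 = 1 and, for t ≥ 0, a_{t+1} = a_0(i_t) if λ_min(Σ_{s=1}^t x_{a_s} x_{a_s}^T) < f(t) and a_{t+1} = b_t otherwise, with i_{t+1} = (i_t mod d) + 1{λ_min(Σ_{s=1}^t x_{a_s} x_{a_s}^T) < f(t)}. Then for all t ≥ 5d/4 + 1/(4d) + 3/2 one has λ_min(Σ_{s=1}^t x_{a_s} x_{a_s}^T) ≥ f(t − d − 1). -/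
open Matrix

/-- The smallest eigenvalue of a symmetric matrix, via the Rayleigh-quotient
characterization: `λ_min(M) = inf {vᵀMv : ‖v‖ = 1}`. -/
noncomputable def lambdaMin {n : ℕ} (M : Matrix (Fin n) (Fin n) ℝ) : ℝ :=
  sInf {r : ℝ | ∃ v : Fin n → ℝ, v ⬝ᵥ v = 1 ∧ r = v ⬝ᵥ M.mulVec v}

/-!
Let `u ≤ t` be the last round with `f u ≤ λ_min(V u)`, where `V s = ∑_{r ≤ s} x_{a_r} x_{a_r}ᵀ`
(round `0` qualifies since `f 0 = 0`). If `t ≤ u + d + 1`, monotonicity of `f` and of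
`s ↦ λ_min(V s)` gives the claim. Otherwise the rule explores in every round of `(u, t)`, cycling
through `A₀`, so `V t` contains `q = ⌊(t - u - 1)/d⌋ ≥ 1` full copies of the exploration design.
As `λ_min` is superadditive, `λ_min(V t) ≥ c √u + q c √d ≥ c √(u + q d) ≥ f (t - d - 1)`.
-/

open Finset

section LambdaMin

variable {n : ℕ}

lemma abs_le_one_of_dotProduct_self_eq_one {v : Fin n → ℝ} (hv : v ⬝ᵥ v = 1) (j : Fin n) :
    |v j| ≤ 1 := by
  rw [← sq_le_one_iff_abs_le_one, ← hv, sq]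
  exact single_le_sum (fun k _ => mul_self_nonneg (v k)) (mem_univ j)

lemma bddBelow_rayleigh (M : Matrix (Fin n) (Fin n) ℝ) :
    BddBelow {r : ℝ | ∃ v : Fin n → ℝ, v ⬝ᵥ v = 1 ∧ r = v ⬝ᵥ M *ᵥ v} := by
  have hsphere : IsCompact {v : Fin n → ℝ | v ⬝ᵥ v = 1} := by
    refine Metric.isCompact_of_isClosed_isBounded
      (isClosed_eq (by fun_prop) continuous_const) ?_
    refine (Metric.isBounded_iff_subset_closedBall 0).2 ⟨1, fun v hv => ?_⟩
    exact mem_closedBall_zero_iff.2 <| (pi_norm_le_iff_of_nonneg zero_le_one).2 fun j =>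
      (Real.norm_eq_abs _).trans_le (abs_le_one_of_dotProduct_self_eq_one hv j)
  refine (hsphere.image (f := fun v => v ⬝ᵥ M *ᵥ v) (by fun_prop)).bddBelow.mono ?_
  rintro _ ⟨v, hv, rfl⟩
  exact ⟨v, hv, rfl⟩

lemma lambdaMin_le (M : Matrix (Fin n) (Fin n) ℝ) {v : Fin n → ℝ} (hv : v ⬝ᵥ v = 1) :
    lambdaMin M ≤ v ⬝ᵥ M *ᵥ v :=
  csInf_le (bddBelow_rayleigh M) ⟨v, hv, rfl⟩

lemma le_lambdaMin (hn : 0 < n) {M : Matrix (Fin n) (Fin n) ℝ} {c : ℝ}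
    (h : ∀ v : Fin n → ℝ, v ⬝ᵥ v = 1 → c ≤ v ⬝ᵥ M *ᵥ v) : c ≤ lambdaMin M := by
  refine le_csInf ⟨_, Pi.single ⟨0, hn⟩ 1, by simp, rfl⟩ ?_
  rintro r ⟨v, hv, rfl⟩
  exact h v hv

lemma lambdaMin_mono (hn : 0 < n) {M N : Matrix (Fin n) (Fin n) ℝ}
    (h : ∀ v : Fin n → ℝ, v ⬝ᵥ M *ᵥ v ≤ v ⬝ᵥ N *ᵥ v) : lambdaMin M ≤ lambdaMin N :=
  le_lambdaMin hn fun v hv => (lambdaMin_le M hv).trans (h v)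

lemma lambdaMin_add_le (hn : 0 < n) (M N : Matrix (Fin n) (Fin n) ℝ) :
    lambdaMin M + lambdaMin N ≤ lambdaMin (M + N) :=
  le_lambdaMin hn fun v hv => by
    rw [add_mulVec, dotProduct_add]
    exact add_le_add (lambdaMin_le M hv) (lambdaMin_le N hv)

lemma nsmul_lambdaMin_le (hn : 0 < n) (M : Matrix (Fin n) (Fin n) ℝ) (q : ℕ) :
    q * lambdaMin M ≤ lambdaMin (q • M) :=
  le_lambdaMin hn fun v hv => by
    rw [smul_mulVec, dotProduct_smul, nsmul_eq_mul]
    exact mul_le_mul_of_nonneg_left (lambdaMin_le M hv) q.cast_nonneg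

lemma dotProduct_sum_vecMulVec_self_mulVec {ι : Type*} (S : Finset ι) (y : ι → Fin n → ℝ)
    (v : Fin n → ℝ) :
    v ⬝ᵥ (∑ j ∈ S, vecMulVec (y j) (y j)) *ᵥ v = ∑ j ∈ S, (y j ⬝ᵥ v) ^ 2 := by
  simp only [sum_mulVec, dotProduct_sum, vecMulVec_mulVec, dotProduct_smul, op_smul_eq_mul]
  exact sum_congr rfl fun j _ => by rw [dotProduct_comm v, sq]

lemma lambdaMin_sum_vecMulVec_self_nonneg (hn : 0 < n) {ι : Type*} (S : Finset ι)
    (y : ι → Fin n → ℝ) : 0 ≤ lambdaMin (∑ j ∈ S, vecMulVec (y j) (y j)) :=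
  le_lambdaMin hn fun v _ => by
    rw [dotProduct_sum_vecMulVec_self_mulVec]
    positivity

end LambdaMin

lemma monotone_lambdaMin_sum_Icc {n : ℕ} (hn : 0 < n) (y : ℕ → Fin n → ℝ) :
    Monotone fun t => lambdaMin (∑ s ∈ Icc 1 t, vecMulVec (y s) (y s)) :=
  fun _ _ hpq => lambdaMin_mono hn fun v => by
    simp only [dotProduct_sum_vecMulVec_self_mulVec]
    exact sum_le_sum_of_subset_of_nonneg (Icc_subset_Icc le_rfl hpq) fun _ _ _ => sq_nonneg _

lemma sum_Icc_one_add {M : Type*} [AddCommMonoid M] (h : ℕ → M) (m n : ℕ) :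
    ∑ s ∈ Icc 1 (m + n), h s = ∑ s ∈ Icc 1 m, h s + ∑ k ∈ range n, h (m + k + 1) := by
  induction n with
  | zero => simp
  | succ n ih =>
    rw [← add_assoc, sum_Icc_succ_top (by omega), ih, sum_range_succ, add_assoc]

section Cyclic

open scoped Fin.NatCast

lemma sum_range_mul_add_natCast {d : ℕ} [NeZero d] {M : Type*} [AddCommMonoid M] (G : Fin d → M)
    (j : Fin d) (q : ℕ) : ∑ k ∈ range (q * d), G (j + (k : Fin d)) = q • ∑ j, G j := by
  induction q with
  | zero => simp
  | succ q ih =>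
    have hcycle : ∑ k ∈ range d, G (j + ((q * d + k : ℕ) : Fin d)) = ∑ j, G j := by
      simp only [Nat.cast_add, Fin.natCast_eq_zero.2 (dvd_mul_left d q), zero_add]
      rw [← Fin.sum_univ_eq_sum_range (fun k => G (j + k))]
      simp only [Fin.cast_val_eq_self]
      exact Fintype.sum_equiv (Equiv.addLeft j) _ _ fun _ => rfl
    rw [add_mul, one_mul, sum_range_add, ih, hcycle, succ_nsmul]

lemma eq_comp_add_natCast_of_cyclic {d K : ℕ} [NeZero d] {a : ℕ → Fin K} {i : ℕ → Fin d}
    (a0 : Fin d → Fin K) {w n : ℕ}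
    (h : ∀ k < n, a (w + k + 1) = a0 (i (w + k)) ∧ i (w + k + 1) = i (w + k) + 1) :
    ∀ k < n, a (w + k + 1) = a0 (i w + (k : Fin d)) := by
  have hi : ∀ k ≤ n, i (w + k) = i w + (k : Fin d) := by
    intro k hk
    induction k with
    | zero => simp
    | succ k ih => rw [← add_assoc, (h k hk).2, ih (by omega), Nat.cast_succ, add_assoc]
  exact fun k hk => by rw [(h k hk).1, hi k hk.le]

lemma Fin.mk_add_one_mod_eq_add_one {d : ℕ} [NeZero d] (j : Fin d)
    (h : ((j : ℕ) + 1) % d < d) :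
    (⟨(j + 1) % d, h⟩ : Fin d) = j + 1 := by
  ext
  simp [Fin.val_add]

lemma lambdaMin_sum_Icc_add_cycles {d K : ℕ} [NeZero d] (x : Fin K → Fin d → ℝ)
    (a0 : Fin d → Fin K) (a : ℕ → Fin K) (w q : ℕ) (j : Fin d)
    (h : ∀ k < q * d, a (w + k + 1) = a0 (j + (k : Fin d))) :
    lambdaMin (∑ s ∈ Icc 1 w, vecMulVec (x (a s)) (x (a s))) +
        q * lambdaMin (∑ j, vecMulVec (x (a0 j)) (x (a0 j))) ≤
      lambdaMin (∑ s ∈ Icc 1 (w + q * d), vecMulVec (x (a s)) (x (a s))) := by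
  have hd := Nat.pos_of_neZero d
  have hcycles : ∑ k ∈ range (q * d), vecMulVec (x (a (w + k + 1))) (x (a (w + k + 1))) =
      q • ∑ j, vecMulVec (x (a0 j)) (x (a0 j)) := by
    rw [← sum_range_mul_add_natCast (fun j => vecMulVec (x (a0 j)) (x (a0 j))) j]
    exact sum_congr rfl fun k hk => by rw [h k (mem_range.1 hk)]
  rw [sum_Icc_one_add, hcycles]
  exact (add_le_add le_rfl (nsmul_lambdaMin_le hd _ q)).trans (lambdaMin_add_le hd _ _)

end Cyclic

lemma sqrt_add_mul_le {u d q : ℝ} (hu : 0 ≤ u) (hd : 0 ≤ d) (hq : 1 ≤ q) :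
    √(u + q * d) ≤ √u + q * √d := by
  rw [Real.sqrt_le_iff]
  refine ⟨by positivity, ?_⟩
  have := Real.sq_sqrt hu
  have := Real.sq_sqrt hd
  have : q * d ≤ q ^ 2 * d := mul_le_mul_of_nonneg_right (by nlinarith) hd
  nlinarith [mul_nonneg (Real.sqrt_nonneg u) (Real.sqrt_nonneg d)]

theorem threshold_le_of_cycle_gain {d : ℕ} (hd : 0 < d) {c : ℝ} (hc : 0 ≤ c) {f L : ℕ → ℝ}
    (hf : ∀ t, f t = c * √t) (hL : Monotone L) (hL0 : 0 ≤ L 0)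
    (hgain : ∀ w q : ℕ, (∀ k < q * d, L (w + k) < f (w + k)) →
      L w + q * (c * √d) ≤ L (w + q * d)) (t : ℕ) :
    f (t - d - 1) ≤ L t := by
  classical
  have hfmono : Monotone f := fun p q hpq => by
    simp only [hf]
    gcongr
  set u := Nat.findGreatest (fun s => f s ≤ L s) t
  have hut : u ≤ t := Nat.findGreatest_le t
  have hu : f u ≤ L u := Nat.findGreatest_spec (P := fun s => f s ≤ L s) (Nat.zero_le t)
    (by simpa only [hf, Nat.cast_zero, Real.sqrt_zero, mul_zero] using hL0)
  by_cases hnear : t ≤ u + d + 1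
  · exact (hfmono (by omega)).trans (hu.trans (hL hut))
  set q := (t - u - 1) / d
  have hq : 1 ≤ q := (Nat.one_le_div_iff hd).2 (by omega)
  have hqd : q * d ≤ t - u - 1 := Nat.div_mul_le_self _ d
  have hdq : t - d - 1 ≤ u + q * d := by
    have : t - u - 1 < q * d + d := Nat.lt_div_mul_add hd
    omega
  have hrun : ∀ k < q * d, L (u + 1 + k) < f (u + 1 + k) := fun k hk =>
    lt_of_not_ge <|
      Nat.findGreatest_is_greatest (P := fun s => f s ≤ L s) (n := t) (by omega) (by omega)
  calc f (t - d - 1) ≤ c * (√u + q * √d) := by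
        rw [hf]
        gcongr
        have hdq' : ((t - d - 1 : ℕ) : ℝ) ≤ u + q * d := by exact_mod_cast hdq
        refine (Real.sqrt_le_sqrt hdq').trans ?_
        exact sqrt_add_mul_le u.cast_nonneg d.cast_nonneg (by exact_mod_cast hq)
    _ = f u + q * (c * √d) := by rw [hf]; ring
    _ ≤ L (u + 1) + q * (c * √d) := by gcongr; exact hu.trans (hL (by omega))
    _ ≤ L (u + 1 + q * d) := hgain _ _ hrun
    _ ≤ L t := hL (by omega)

theorem stmt10_general {d K : ℕ} (hd : 0 < d) (x : Fin K → Fin d → ℝ)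
    (a0 : Fin d → Fin K)
    (b : ℕ → Fin K) (a : ℕ → Fin K) (i : ℕ → Fin d)
    (cA0 : ℝ)
    (hc : cA0 = lambdaMin (∑ i : Fin d, Matrix.vecMulVec (x (a0 i)) (x (a0 i))) / Real.sqrt d)
    (f : ℕ → ℝ) (hf : ∀ t : ℕ, f t = cA0 * Real.sqrt t)
    (ha : ∀ t : ℕ, a (t + 1) =
      if lambdaMin (∑ s ∈ Finset.Icc 1 t, Matrix.vecMulVec (x (a s)) (x (a s))) < f t then
        a0 (i t)
      else b t)
    (hi : ∀ t : ℕ, i (t + 1) =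
      if lambdaMin (∑ s ∈ Finset.Icc 1 t, Matrix.vecMulVec (x (a s)) (x (a s))) < f t then
        ⟨((i t : ℕ) + 1) % d, Nat.mod_lt _ hd⟩
      else i t) :
    ∀ t : ℕ, (5 * d / 4 + 1 / (4 * d) + 3 / 2 : ℝ) ≤ t →
      f (t - d - 1) ≤
        lambdaMin (∑ s ∈ Finset.Icc 1 t, Matrix.vecMulVec (x (a s)) (x (a s))) := by
  intro t _
  have : NeZero d := ⟨hd.ne'⟩
  have hdesign_nonneg := lambdaMin_sum_vecMulVec_self_nonneg hd univ fun j => x (a0 j)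
  have hdesign : lambdaMin (∑ j, vecMulVec (x (a0 j)) (x (a0 j))) = cA0 * √d := by
    rw [hc, div_mul_cancel₀ _ (Real.sqrt_pos.2 (by exact_mod_cast hd)).ne']
  refine threshold_le_of_cycle_gain hd (hc ▸ div_nonneg hdesign_nonneg (Real.sqrt_nonneg _)) hf
    (monotone_lambdaMin_sum_Icc hd fun s => x (a s))
    (lambdaMin_sum_vecMulVec_self_nonneg hd _ _) (fun w q hexplore => ?_) t
  rw [← hdesign]
  refine lambdaMin_sum_Icc_add_cycles x a0 a w q (i w)
    (eq_comp_add_natCast_of_cyclic a0 fun k hk => ⟨?_, ?_⟩)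
  · rw [ha, if_pos (hexplore k hk)]
  · rw [hi, if_pos (hexplore k hk), Fin.mk_add_one_mod_eq_add_one]

/-- forced exploration: with an exploration set `A₀ = {a₀(1), …, a₀(d)}` whose
design has positive smallest eigenvalue, `c_{A₀} = λ_min(∑ᵢ x_{a₀(i)} x_{a₀(i)}ᵀ)/√d`,
`f(t) = c_{A₀}√t`, and the sampling rule that plays the next exploration arm `a₀(i_t)`
(cyclically) whenever `λ_min(∑_{s=1}^t x_{a_s} x_{a_s}ᵀ) < f(t)` and otherwise plays `b_t`,
one has `λ_min(∑_{s=1}^t x_{a_s} x_{a_s}ᵀ) ≥ f(t - d - 1)` for all `t ≥ 5d/4 + 1/(4d) + 3/2`. -/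
theorem stmt10 {d K : ℕ} (hd : 0 < d) (x : Fin K → Fin d → ℝ)
    (a0 : Fin d → Fin K)
    (hA0 : 0 < lambdaMin (∑ i : Fin d, Matrix.vecMulVec (x (a0 i)) (x (a0 i))))
    (b : ℕ → Fin K) (a : ℕ → Fin K) (i : ℕ → Fin d)
    (cA0 : ℝ)
    (hc : cA0 = lambdaMin (∑ i : Fin d, Matrix.vecMulVec (x (a0 i)) (x (a0 i))) / Real.sqrt d)
    (f : ℕ → ℝ) (hf : ∀ t : ℕ, f t = cA0 * Real.sqrt t)
    (hi0 : i 0 = ⟨0, hd⟩)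
    (ha : ∀ t : ℕ, a (t + 1) =
      if lambdaMin (∑ s ∈ Finset.Icc 1 t, Matrix.vecMulVec (x (a s)) (x (a s))) < f t then
        a0 (i t)
      else b t)
    (hi : ∀ t : ℕ, i (t + 1) =
      if lambdaMin (∑ s ∈ Finset.Icc 1 t, Matrix.vecMulVec (x (a s)) (x (a s))) < f t then
        ⟨((i t : ℕ) + 1) % d, Nat.mod_lt _ hd⟩
      else i t) :
    ∀ t : ℕ, (5 * d / 4 + 1 / (4 * d) + 3 / 2 : ℝ) ≤ t →
      f (t - d - 1) ≤
        lambdaMin (∑ s ∈ Finset.Icc 1 t, Matrix.vecMulVec (x (a s)) (x (a s))) :=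
  stmt10_general hd x a0 b a i cA0 hc f hf ha hi
end

section
/- Let θ, θ̂ ∈ ℝ^d, let V be a symmetric positive definite d×d matrix, let β > 0, ε ≥ 0 and ρ ∈ ℝ. Suppose min_{a ∈ A} (|x_a^T θ̂ − ρ| + ε)² / (2 x_a^T V^{-1} x_a) > β, and suppose there exists an arm ã such that either (x_ã^T θ > ρ + ε and x_ã^T θ̂ < ρ) or (x_ã^T θ < ρ − ε and x_ã^T θ̂ > ρ). Then |x_ã^T (θ − θ̂)| > ‖x_ã‖_{V^{-1}} √(2β). -/
open Matrix

/-- if `min_a (|xₐᵀθ̂ - ρ| + ε)² / (2 xₐᵀ V⁻¹ xₐ) > β` and some arm `ã` outside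
the `ε`-band around `ρ` is misclassified (i.e. `xₐ̃ᵀθ > ρ + ε` but `xₐ̃ᵀθ̂ < ρ`, or
`xₐ̃ᵀθ < ρ - ε` but `xₐ̃ᵀθ̂ > ρ`), then `|xₐ̃ᵀ(θ - θ̂)| > ‖xₐ̃‖_{V⁻¹} √(2β)`. -/
theorem stmt17 {d K : ℕ} (x : Fin K → Fin d → ℝ) (θ θhat : Fin d → ℝ)
    (V : Matrix (Fin d) (Fin d) ℝ) (hV : V.PosDef)
    (β : ℝ) (hβ : 0 < β) (ε ρ : ℝ) (hε : 0 ≤ ε)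
    (hmin : ∀ a : Fin K,
      β < (|x a ⬝ᵥ θhat - ρ| + ε) ^ 2 / (2 * (x a ⬝ᵥ V⁻¹.mulVec (x a))))
    (atil : Fin K)
    (hbad : (ρ + ε < x atil ⬝ᵥ θ ∧ x atil ⬝ᵥ θhat < ρ) ∨
            (x atil ⬝ᵥ θ < ρ - ε ∧ ρ < x atil ⬝ᵥ θhat)) :
    Real.sqrt (x atil ⬝ᵥ V⁻¹.mulVec (x atil)) * Real.sqrt (2 * β) <
      |x atil ⬝ᵥ (θ - θhat)| := by
  set q := x atil ⬝ᵥ V⁻¹.mulVec (x atil) with hq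
  set N := |x atil ⬝ᵥ θhat - ρ| + ε with hN
  have hNnn : 0 ≤ N := add_nonneg (abs_nonneg _) hε
  have hmin' := hmin atil
  have hqpos : 0 < q := by
    by_contra h
    push_neg at h
    have h2q : 2 * q ≤ 0 := by linarith
    have : N ^ 2 / (2 * q) ≤ 0 := div_nonpos_of_nonneg_of_nonpos (by positivity) h2q
    linarith
  have key : q * (2 * β) < N ^ 2 := by
    have := (lt_div_iff₀ (by positivity : (0:ℝ) < 2 * q)).mp hmin'
    nlinarith
  have hsq : Real.sqrt q * Real.sqrt (2 * β) < N := by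
    have h1 : Real.sqrt (q * (2 * β)) < Real.sqrt (N ^ 2) :=
      Real.sqrt_lt_sqrt (by positivity) key
    rwa [Real.sqrt_mul hqpos.le, Real.sqrt_sq hNnn] at h1
  have hNle : N ≤ |x atil ⬝ᵥ (θ - θhat)| := by
    rw [dotProduct_sub]
    rcases hbad with ⟨h1, h2⟩ | ⟨h1, h2⟩
    · rw [abs_sub_comm, abs_of_pos (by linarith)] at hN
      rw [abs_of_pos (by linarith)]; linarith
    · rw [abs_of_pos (by linarith)] at hN
      rw [abs_of_neg (by linarith)]; linarith
  linarith
end
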